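/- Let q = p^d with p prime and d ≥ 1, and let C be a code in the Hamming graph H(m,q) with minimum distance δ ≥ 5 containing the zero vertex 0. Suppose X ≤ Aut(C) is such that C is X-alphabet-affine and (X,2)-neighbour-transitive. Let N be a normal p-subgroup of K = X ∩ B containing every normal p-subgroup of K (i.e., N = O_p(K)), and let W be the orbit of 0 under N. Then: (1) W ⊆ C, and W is an F_p-subspace of V = (F_p^d)^M invariant under the stabiliser X_0 of 0 in X; (2) N equals the translation group T_W = {t_α : α ∈ W} and the setwise stabiliser X_W of W in X equals T_W ⋊ X_0; (3) W is (X_W,2)-neighbour-transitive and its minimum distance is at least 5; (4) W is X_W-alphabet-affine. -/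

import Mathlib

/-!
Since `O_p(K)` is characteristic in `K ⊴ X`, it is normal in `X`. On each entry it induces a
`p`-subgroup normalised by the affine 2-transitive group `X_i^{Q_i}`; a `p`-group acting linearly
on `F_p^d` fixes a nonzero vector, and `X_i^{Q_i}` moves it to every nonzero vector, so every
element of `O_p(K)` is a translation. Conversely, a nontrivial normal subgroup of an affine
2-transitive group contains all translations, and commutators taken entry by entry produce a
nontrivial translation in `K`; the translations in `K` form a normal `p`-subgroup, so
`O_p(K) ≠ 1`. Hence `N = T_W` for the additive group `W = 0^N ⊆ C`, and `X_W = T_W ⋊ X_0`.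
Finally, as `δ ≥ 5`, an element of `X` mapping a vertex of weight at most 2 to another one fixes
`0`, so translations by `W` together with `X_0` transfer neighbour-transitivity and the local
2-transitivity from `C` to `W`.
-/

open Equiv

namespace Paper

/-- A Hamming-graph automorphism of `Fin m → Q` given by entrywise permutations `h`
and a permutation `σ` of the entries. -/
def IsQAutPair {m : ℕ} {Q : Type*} (g : Perm (Fin m → Q)) (h : Fin m → Perm Q)
    (σ : Perm (Fin m)) : Prop :=
  ∀ α i, g α i = h i (α (σ.symm i))

/-- `g` is an automorphism of the Hamming graph `H(m,q)`. -/
def IsQAut {m : ℕ} {Q : Type*} (g : Perm (Fin m → Q)) : Prop :=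
  ∃ h σ, IsQAutPair g h σ

/-- The permutation group `X_i^{Q_i}` induced on the alphabet in entry `i`
by the stabiliser in `X` of the entry `i`. -/
def indQ {m : ℕ} {Q : Type*} (X : Set (Perm (Fin m → Q))) (i : Fin m) : Set (Perm Q) :=
  {π | ∃ g ∈ X, ∃ h σ, IsQAutPair g h σ ∧ σ i = i ∧ h i = π}

/-- `C_s`, the set of vertices at Hamming distance exactly `s` from the code `C`. -/
def distSet {m : ℕ} {Q : Type*} [DecidableEq Q] (C : Set (Fin m → Q)) (s : ℕ) :
    Set (Fin m → Q) :=
  {v | (∃ c ∈ C, hammingDist v c = s) ∧ ∀ c ∈ C, s ≤ hammingDist v c}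

/-- `C` is `(X,s)`-neighbour-transitive: `X` acts transitively on each of
`C = C_0, C_1, …, C_s`. -/
def NbrTrans {m : ℕ} {Q : Type*} [DecidableEq Q] (X : Set (Perm (Fin m → Q)))
    (C : Set (Fin m → Q)) (s : ℕ) : Prop :=
  ∀ j ≤ s, ∀ u ∈ distSet C j, ∀ v ∈ distSet C j, ∃ g ∈ X, g u = v

/-- `δ` is the minimum distance of the code `C`. -/
def IsMinDist {m : ℕ} {Q : Type*} [DecidableEq Q] (C : Set (Fin m → Q)) (δ : ℕ) : Prop :=
  (∃ u ∈ C, ∃ v ∈ C, u ≠ v ∧ hammingDist u v = δ) ∧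
  ∀ u ∈ C, ∀ v ∈ C, u ≠ v → δ ≤ hammingDist u v

/-- The alphabet `Q = F_p^d`. -/
abbrev QA (p d : ℕ) : Type := Fin d → ZMod p

/-- The vertex set `V = (F_p^d)^M` of `H(m, p^d)`. -/
abbrev VA (p d m : ℕ) : Type := Fin m → QA p d

/-- The subgroup of `Sym(A)` consisting of all translations `v ↦ v + a`. -/
def TransSub (A : Type*) [AddCommGroup A] : Subgroup (Perm A) where
  carrier := {g : Perm A | ∃ a : A, ∀ v, g v = v + a}
  one_mem' := ⟨0, fun v => by simp⟩
  mul_mem' := fun {f g} hf hg => by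
    obtain ⟨a, ha⟩ := hf
    obtain ⟨b, hb⟩ := hg
    exact ⟨b + a, fun v => by rw [Perm.mul_apply, hb, ha, add_assoc]⟩
  inv_mem' := fun {f} hf => by
    obtain ⟨a, ha⟩ := hf
    refine ⟨-a, fun v => ?_⟩
    have h1 : f (v + -a) = v := by rw [ha]; abel
    calc f⁻¹ v = f⁻¹ (f (v + -a)) := by rw [h1]
      _ = v + -a := by first | simp | exact Equiv.symm_apply_apply f (v + -a)

/-- `K = X ∩ B`, the kernel of the action of `X` on the set of entries `M`:
the elements of `X` acting entrywise (with trivial permutation of `M`). -/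
def KSet {p d m : ℕ} (X : Set (Perm (VA p d m))) : Set (Perm (VA p d m)) :=
  {g | g ∈ X ∧ ∃ h, IsQAutPair g h 1}

/-- The group `K^{Q_i}` induced on the alphabet in entry `i` by `K = X ∩ B`. -/
def indK {p d m : ℕ} (X : Set (Perm (VA p d m))) (i : Fin m) : Set (Perm (QA p d)) :=
  {π | ∃ g ∈ X, ∃ h, IsQAutPair g h 1 ∧ h i = π}

/-- `C` is `X`-alphabet-affine: `X ≤ Aut(C)`, `K ≠ 1`, `X` is transitive on the entries,
and each `X_i^{Q_i}` is an affine 2-transitive group, i.e. it is 2-transitive on `Q_i`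
and contains the translation group `T_i` as a normal subgroup. -/
def AlphabetAffine {p d m : ℕ} (X : Set (Perm (VA p d m))) (C : Set (VA p d m)) : Prop :=
  (∀ g ∈ X, IsQAut g) ∧
  (∀ g ∈ X, g '' C = C) ∧
  (∃ g ∈ KSet X, g ≠ 1) ∧
  (∀ i j : Fin m, ∃ g ∈ X, ∃ h σ, IsQAutPair g h σ ∧ σ i = j) ∧
  (∀ i : Fin m,
    (∀ a b a' b' : QA p d, a ≠ b → a' ≠ b' → ∃ π ∈ indQ X i, π a = a' ∧ π b = b') ∧
    ((TransSub (QA p d) : Set (Perm (QA p d))) ⊆ indQ X i) ∧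
    (∀ π ∈ indQ X i, ∀ t ∈ TransSub (QA p d), π * t * π⁻¹ ∈ TransSub (QA p d)))

open scoped commutatorElement Pointwise

section LargestNormalPSubgroup

variable {G : Type*} [Group G] {p : ℕ} {K : Set G} {N : Subgroup G}

theorem conj_mem_of_largest_normal_pSubgroup
    (hN1 : (N : Set G) ⊆ K) (hN2 : IsPGroup p N) (hN3 : ∀ g ∈ K, ∀ t ∈ N, g * t * g⁻¹ ∈ N)
    (hN4 : ∀ P : Subgroup G, (P : Set G) ⊆ K → IsPGroup p P →
      (∀ g ∈ K, ∀ t ∈ P, g * t * g⁻¹ ∈ P) → P ≤ N)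
    {x : G} (hx : ∀ g ∈ K, x * g * x⁻¹ ∈ K) (hx' : ∀ g ∈ K, x⁻¹ * g * x ∈ K)
    {n : G} (hn : n ∈ N) : x * n * x⁻¹ ∈ N := by
  refine hN4 (N.map (MulAut.conj x).toMonoidHom) ?_ (hN2.map _) ?_ ⟨n, hn, rfl⟩
  · rintro _ ⟨t, ht, rfl⟩
    exact hx t (hN1 ht)
  · rintro g hg _ ⟨t, ht, rfl⟩
    refine ⟨(x⁻¹ * g * x) * t * (x⁻¹ * g * x)⁻¹, hN3 _ (hx' g hg) t ht, ?_⟩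
    simp only [MulEquiv.coe_toMonoidHom, MulAut.conj_apply]
    group

end LargestNormalPSubgroup

section Affine

variable {A : Type*} [AddCommGroup A]

theorem addRight_mem_transSub (a : A) : Equiv.addRight a ∈ TransSub A := ⟨a, fun _ => rfl⟩

theorem mem_transSub_iff {t : Perm A} : t ∈ TransSub A ↔ t = Equiv.addRight (t 0) := by
  refine ⟨fun ⟨a, ha⟩ => Equiv.ext fun v => ?_, fun h => h ▸ addRight_mem_transSub _⟩
  simp [ha]

theorem apply_eq_add_of_mem_transSub {t : Perm A} (ht : t ∈ TransSub A) (v : A) :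
    t v = v + t 0 := by
  obtain ⟨a, ha⟩ := ht
  rw [ha, ha, zero_add]

def linPart (π : Perm A) (a : A) : A := π a - π 0

def NormalizesTrans (π : Perm A) : Prop := ∀ t ∈ TransSub A, π * t * π⁻¹ ∈ TransSub A

theorem NormalizesTrans.map_add {π : Perm A} (hπ : NormalizesTrans π) (x a : A) :
    π (x + a) = π x + linPart π a := by
  have key : ∀ v, π (π⁻¹ v + a) = v + (π * Equiv.addRight a * π⁻¹) 0 := fun v => by
    simpa using apply_eq_add_of_mem_transSub (hπ _ (addRight_mem_transSub a)) v
  have h0 := key (π 0)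
  have hx := key (π x)
  simp only [Perm.inv_def, symm_apply_apply, zero_add] at h0 hx
  rw [hx, linPart, h0, add_sub_cancel_left]

theorem linPart_one (a : A) : linPart 1 a = a := by simp [linPart]

theorem linPart_zero (π : Perm A) : linPart π 0 = 0 := sub_self _

theorem NormalizesTrans.linPart_mul {π : Perm A} (hπ : NormalizesTrans π) (ρ : Perm A)
    (a : A) : linPart (π * ρ) a = linPart π (linPart ρ a) := by
  have : ρ a = ρ 0 + linPart ρ a := by rw [linPart, add_sub_cancel]
  rw [linPart, Perm.mul_apply, Perm.mul_apply, this, hπ.map_add, add_sub_cancel_left]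

theorem NormalizesTrans.conj_addRight {π : Perm A} (hπ : NormalizesTrans π) (a : A) :
    π * Equiv.addRight a * π⁻¹ = Equiv.addRight (linPart π a) :=
  Equiv.ext fun v => by
    simp only [Perm.mul_apply, coe_addRight, hπ.map_add, Perm.inv_def, apply_symm_apply]

theorem NormalizesTrans.mem_transSub {π : Perm A} (hπ : NormalizesTrans π)
    (h : ∀ a, linPart π a = a) : π ∈ TransSub A :=
  ⟨π 0, fun v => by rw [← zero_add v, hπ.map_add, h, add_comm, zero_add]⟩

theorem mem_transSub_of_commute {π : Perm A} (h : ∀ a, Commute π (Equiv.addRight a)) :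
    π ∈ TransSub A :=
  ⟨π 0, fun v => by simpa [add_comm] using (congrArg (· 0) (h v).eq)⟩

theorem NormalizesTrans.commutatorElement_mem {π t : Perm A} (hπ : NormalizesTrans π)
    (ht : t ∈ TransSub A) : ⁅π, t⁆ ∈ TransSub A := by
  rw [commutatorElement_def]
  exact mul_mem (hπ t ht) (inv_mem ht)

abbrev linPartAction {S : Subgroup (Perm A)}
    (hS : ∀ π ∈ S, NormalizesTrans π) : MulAction S A where
  smul π a := linPart π a
  one_smul := linPart_one
  mul_smul π ρ a := (hS π π.2).linPart_mul ρ a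

theorem isPGroup_transSub {p : ℕ} (hp : ∀ a : A, p • a = 0) :
    IsPGroup p (TransSub A) := by
  rintro ⟨t, ht⟩
  have : t ^ p = 1 := by rw [mem_transSub_iff.1 ht, nsmul_addRight, hp, addRight_zero]
  exact ⟨1, Subtype.ext (by simpa using this)⟩

end Affine

/-- `T ≤ G ≤ AGL(A)` with `G_0` transitive on `A ∖ {0}`: an affine 2-transitive group. -/
structure IsAffine2Trans {A : Type*} [AddCommGroup A] (G : Subgroup (Perm A)) : Prop where
  transSub_le : TransSub A ≤ G
  normalizesTrans : ∀ π ∈ G, NormalizesTrans π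
  exists_fix_zero : ∀ a b : A, a ≠ 0 → b ≠ 0 → ∃ π ∈ G, π 0 = 0 ∧ π a = b

namespace IsAffine2Trans

variable {A : Type*} [AddCommGroup A] {G S : Subgroup (Perm A)}

theorem iff_twoTransitive :
    IsAffine2Trans G ↔
      (∀ a b a' b' : A, a ≠ b → a' ≠ b' → ∃ π ∈ G, π a = a' ∧ π b = b') ∧
      (TransSub A : Set (Perm A)) ⊆ G ∧ ∀ π ∈ G, NormalizesTrans π := by
  refine ⟨fun hG => ⟨fun a b a' b' hab hab' => ?_, hG.transSub_le, hG.normalizesTrans⟩,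
    fun ⟨h2, hT, hN⟩ => ⟨hT, hN, fun a b ha hb => ?_⟩⟩
  · obtain ⟨π, hπ, hπ0, hπb⟩ := hG.exists_fix_zero (b - a) (b' - a')
      (sub_ne_zero.2 hab.symm) (sub_ne_zero.2 hab'.symm)
    refine ⟨Equiv.addRight a' * π * Equiv.addRight (-a),
      mul_mem (mul_mem (hG.transSub_le (addRight_mem_transSub a')) hπ)
        (hG.transSub_le (addRight_mem_transSub (-a))), ?_, ?_⟩
    · simp [hπ0]
    · simp [← sub_eq_add_neg, hπb]
  · exact h2 0 a 0 b ha.symm hb.symm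

variable (hG : IsAffine2Trans G) (hS : ∀ π ∈ G, ∀ κ ∈ S, π * κ * π⁻¹ ∈ S)
include hG hS

theorem transSub_le_of_mem_transSub {t : Perm A} (htS : t ∈ S) (htT : t ∈ TransSub A)
    (ht1 : t ≠ 1) : TransSub A ≤ S := by
  intro τ hτ
  rw [mem_transSub_iff] at htT hτ
  have hc : t 0 ≠ 0 := fun h => ht1 (by rw [htT, h, Equiv.addRight_zero])
  by_cases hb : τ 0 = 0
  · rw [hτ, hb, Equiv.addRight_zero]
    exact S.one_mem
  obtain ⟨π, hπ, hπ0, hπc⟩ := hG.exists_fix_zero _ _ hc hb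
  have := hS π hπ t htS
  rwa [htT, (hG.normalizesTrans π hπ).conj_addRight, linPart, hπc, hπ0,
    sub_zero, ← hτ] at this

theorem exists_mem_transSub_ne_one (hSG : S ≤ G) {κ : Perm A} (hκ : κ ∈ S) (hκ1 : κ ≠ 1) :
    ∃ t ∈ S, t ∈ TransSub A ∧ t ≠ 1 := by
  by_cases hcomm : ∀ a, Commute κ (Equiv.addRight a)
  · exact ⟨κ, hκ, mem_transSub_of_commute hcomm, hκ1⟩
  obtain ⟨a, ha⟩ := not_forall.1 hcomm
  have haG := hG.transSub_le (addRight_mem_transSub a)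
  refine ⟨⁅κ, Equiv.addRight a⁆, ?_,
    (hG.normalizesTrans κ (hSG hκ)).commutatorElement_mem (addRight_mem_transSub a),
    fun h => ha (commutatorElement_eq_one_iff_commute.1 h)⟩
  have : ⁅κ, Equiv.addRight a⁆ = κ * (Equiv.addRight a * κ⁻¹ * (Equiv.addRight a)⁻¹) := by
    rw [commutatorElement_def]; group
  exact this ▸ mul_mem hκ (hS _ haG _ (inv_mem hκ))

theorem transSub_le_of_ne_one (hSG : S ≤ G) {κ : Perm A} (hκ : κ ∈ S) (hκ1 : κ ≠ 1) :
    TransSub A ≤ S := by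
  obtain ⟨t, htS, htT, ht1⟩ := hG.exists_mem_transSub_ne_one hS hSG hκ hκ1
  exact hG.transSub_le_of_mem_transSub hS htS htT ht1

theorem le_transSub_of_isPGroup [Finite A] {p : ℕ} [Fact p.Prime] (hpA : p ∣ Nat.card A)
    (hSG : S ≤ G) (hpS : IsPGroup p S) : S ≤ TransSub A := by
  -- `S` acts linearly and fixes `0`; as `p ∣ |A|` it fixes some `a₀ ≠ 0` too, and conjugating
  -- by `G_0` carries `a₀` to any `b ≠ 0`, so every linear part is the identity.
  let _ : MulAction S A := linPartAction fun π hπ => hG.normalizesTrans π (hSG hπ)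
  obtain ⟨a₀, ha₀, ha₀0⟩ := hpS.exists_fixed_point_of_prime_dvd_card_of_fixed_point A hpA
    (a := 0) fun π => linPart_zero π.1
  intro κ hκ
  have hκaff := hG.normalizesTrans κ (hSG hκ)
  refine hκaff.mem_transSub fun b => ?_
  rcases eq_or_ne b 0 with rfl | hb
  · exact linPart_zero κ
  obtain ⟨π, hπ, hπ0, hπa⟩ := hG.exists_fix_zero a₀ b ha₀0.symm hb
  have hlin : linPart π a₀ = b := by rw [linPart, hπa, hπ0, sub_zero]
  have hconj : π⁻¹ * κ * π ∈ S := by simpa using hS π⁻¹ (inv_mem hπ) κ hκ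
  have hfix : linPart (π⁻¹ * κ * π) a₀ = a₀ := ha₀ ⟨_, hconj⟩
  calc linPart κ b = linPart (π * (π⁻¹ * κ * π)) a₀ := by
        rw [← hlin, ← hκaff.linPart_mul]; group
    _ = b := by rw [(hG.normalizesTrans π hπ).linPart_mul, hfix, hlin]

end IsAffine2Trans

section QAutPair

variable {m : ℕ} {Q : Type*}

theorem isQAutPair_one : IsQAutPair (1 : Perm (Fin m → Q)) (fun _ => 1) 1 := fun _ _ => rfl

theorem IsQAutPair.mul {g₁ g₂ : Perm (Fin m → Q)} {h₁ h₂ : Fin m → Perm Q}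
    {σ₁ σ₂ : Perm (Fin m)} (H₁ : IsQAutPair g₁ h₁ σ₁) (H₂ : IsQAutPair g₂ h₂ σ₂) :
    IsQAutPair (g₁ * g₂) (fun i => h₁ i * h₂ (σ₁⁻¹ i)) (σ₁ * σ₂) := fun α i => by
  rw [Perm.mul_apply, H₁, H₂]
  rfl

theorem IsQAutPair.inv {g : Perm (Fin m → Q)} {h : Fin m → Perm Q} {σ : Perm (Fin m)}
    (H : IsQAutPair g h σ) : IsQAutPair g⁻¹ (fun i => (h (σ i))⁻¹) σ⁻¹ := fun α i => by
  have := H (g⁻¹ α) (σ i)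
  simp only [Perm.inv_def, apply_symm_apply, symm_apply_apply, symm_symm] at this ⊢
  rw [this, symm_apply_apply]

theorem IsQAutPair.mul_base {g₁ g₂ : Perm (Fin m → Q)} {h₁ h₂ : Fin m → Perm Q}
    (H₁ : IsQAutPair g₁ h₁ 1) (H₂ : IsQAutPair g₂ h₂ 1) :
    IsQAutPair (g₁ * g₂) (fun i => h₁ i * h₂ i) 1 := by
  simpa using H₁.mul H₂

theorem IsQAutPair.conj {x g : Perm (Fin m → Q)} {h k : Fin m → Perm Q} {σ : Perm (Fin m)}
    (Hx : IsQAutPair x h σ) (Hg : IsQAutPair g k 1) :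
    IsQAutPair (x * g * x⁻¹) (fun i => h i * k (σ⁻¹ i) * (h i)⁻¹) 1 := by
  simpa [mul_assoc] using (Hx.mul Hg).mul Hx.inv

theorem IsQAutPair.pow {g : Perm (Fin m → Q)} {h : Fin m → Perm Q} (H : IsQAutPair g h 1)
    (n : ℕ) : IsQAutPair (g ^ n) (fun i => h i ^ n) 1 := by
  induction n with
  | zero => simpa using isQAutPair_one
  | succ n ih => simpa [pow_succ] using ih.mul_base H

theorem IsQAutPair.eq_of_base {g : Perm (Fin m → Q)} {h h' : Fin m → Perm Q}
    (H : IsQAutPair g h 1) (H' : IsQAutPair g h' 1) : h = h' :=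
  funext fun i => Equiv.ext fun a => (H (fun _ => a) i).symm.trans (H' (fun _ => a) i)

theorem IsQAutPair.hammingDist_eq [DecidableEq Q] {g : Perm (Fin m → Q)} {h : Fin m → Perm Q}
    {σ : Perm (Fin m)} (H : IsQAutPair g h σ) (u v : Fin m → Q) :
    hammingDist (g u) (g v) = hammingDist u v := by
  have hg : ∀ w, g w = fun i => h i (w (σ.symm i)) := fun w => funext (H w)
  rw [hg, hg, hammingDist_comp _ fun i => (h i).injective]
  exact Finset.card_equiv σ.symm (by simp)

theorem IsQAutPair.commutatorElement {g u : Perm (Fin m → Q)}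
    {h k : Fin m → Perm Q} (H : IsQAutPair g h 1) (H' : IsQAutPair u k 1) :
    IsQAutPair ⁅g, u⁆ (fun i => ⁅h i, k i⁆) 1 := by
  simp only [commutatorElement_def]
  exact ((H.mul_base H').mul_base (by simpa using H.inv)).mul_base (by simpa using H'.inv)

end QAutPair

section BaseGroup

variable {m : ℕ} {Q : Type*}

/-- The base group `B = Sym(Q)^M`. -/
def baseGroup (m : ℕ) (Q : Type*) : Subgroup (Perm (Fin m → Q)) where
  carrier := {g | ∃ h, IsQAutPair g h 1}
  one_mem' := ⟨_, isQAutPair_one⟩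
  mul_mem' := fun ⟨_, H₁⟩ ⟨_, H₂⟩ => ⟨_, H₁.mul_base H₂⟩
  inv_mem' := fun ⟨_, H⟩ => ⟨_, by simpa using H.inv⟩

theorem conj_mem_baseGroup {x g : Perm (Fin m → Q)} (hx : IsQAut x) (hg : g ∈ baseGroup m Q) :
    x * g * x⁻¹ ∈ baseGroup m Q :=
  let ⟨_, _, Hx⟩ := hx
  let ⟨_, Hg⟩ := hg
  ⟨_, Hx.conj Hg⟩

def indQSubgroup (X : Subgroup (Perm (Fin m → Q))) (i : Fin m) : Subgroup (Perm Q) where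
  carrier := indQ X i
  one_mem' := ⟨1, X.one_mem, _, 1, isQAutPair_one, rfl, rfl⟩
  mul_mem' := by
    rintro _ _ ⟨x₁, hx₁, h₁, σ₁, H₁, hσ₁, rfl⟩ ⟨x₂, hx₂, h₂, σ₂, H₂, hσ₂, rfl⟩
    refine ⟨x₁ * x₂, X.mul_mem hx₁ hx₂, _, _, H₁.mul H₂, by simp [hσ₁, hσ₂], ?_⟩
    simp [Perm.inv_eq_iff_eq.2 hσ₁.symm]
  inv_mem' := by
    rintro _ ⟨x, hx, h, σ, H, hσ, rfl⟩
    exact ⟨x⁻¹, X.inv_mem hx, _, _, H.inv, Perm.inv_eq_iff_eq.2 hσ.symm, by simp [hσ]⟩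

theorem IsQAutPair.mem_indQSubgroup {X : Subgroup (Perm (Fin m → Q))} {x : Perm (Fin m → Q)}
    {h : Fin m → Perm Q} {σ : Perm (Fin m)} (hx : x ∈ X) (H : IsQAutPair x h σ) {i : Fin m}
    (hσ : σ i = i) : h i ∈ indQSubgroup X i :=
  ⟨x, hx, h, σ, H, hσ, rfl⟩

theorem indQSubgroup_mono {X Y : Subgroup (Perm (Fin m → Q))} (hXY : X ≤ Y) (i : Fin m) :
    indQSubgroup X i ≤ indQSubgroup Y i := by
  rintro _ ⟨x, hx, h, σ, H, hσ, rfl⟩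
  exact H.mem_indQSubgroup (hXY hx) hσ

variable [AddCommGroup Q]

theorem isQAutPair_addRight (α : Fin m → Q) :
    IsQAutPair (Equiv.addRight α) (fun i => Equiv.addRight (α i)) 1 := fun _ _ => rfl

theorem IsQAutPair.mem_transSub {g : Perm (Fin m → Q)} {h : Fin m → Perm Q}
    (H : IsQAutPair g h 1) (hh : ∀ i, h i ∈ TransSub Q) : g ∈ TransSub (Fin m → Q) :=
  ⟨g 0, fun v => funext fun i => by
    rw [Pi.add_apply, H, H, apply_eq_add_of_mem_transSub (hh i)]
    rfl⟩

theorem IsQAutPair.normalizesTrans {g : Perm (Fin m → Q)} {h : Fin m → Perm Q}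
    {σ : Perm (Fin m)} (H : IsQAutPair g h σ) (hh : ∀ i, NormalizesTrans (h i)) :
    NormalizesTrans g := by
  intro t ht
  rw [mem_transSub_iff.1 ht]
  exact (H.conj (isQAutPair_addRight (t 0))).mem_transSub fun i =>
    hh i _ (addRight_mem_transSub _)

end BaseGroup

section InducedKernel

variable {p d m : ℕ} {X Y : Subgroup (Perm (VA p d m))}

def indKSubgroup (Y : Subgroup (Perm (VA p d m))) (i : Fin m) : Subgroup (Perm (QA p d)) where
  carrier := indK Y i
  one_mem' := ⟨1, Y.one_mem, _, isQAutPair_one, rfl⟩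
  mul_mem' := by
    rintro _ _ ⟨g₁, hg₁, h₁, H₁, rfl⟩ ⟨g₂, hg₂, h₂, H₂, rfl⟩
    exact ⟨g₁ * g₂, Y.mul_mem hg₁ hg₂, _, H₁.mul_base H₂, rfl⟩
  inv_mem' := by
    rintro _ ⟨g, hg, h, H, rfl⟩
    exact ⟨g⁻¹, Y.inv_mem hg, _, by simpa using H.inv, rfl⟩

theorem indKSubgroup_le_indQSubgroup (hYX : Y ≤ X) (i : Fin m) :
    indKSubgroup Y i ≤ indQSubgroup X i := by
  rintro _ ⟨g, hg, h, H, rfl⟩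
  exact H.mem_indQSubgroup (hYX hg) rfl

theorem conj_mem_indKSubgroup (hY : ∀ x ∈ X, ∀ y ∈ Y, x * y * x⁻¹ ∈ Y) {i : Fin m}
    {π κ : Perm (QA p d)} (hπ : π ∈ indQSubgroup X i) (hκ : κ ∈ indKSubgroup Y i) :
    π * κ * π⁻¹ ∈ indKSubgroup Y i := by
  obtain ⟨x, hx, h, σ, Hx, hσ, rfl⟩ := hπ
  obtain ⟨g, hg, k, Hg, rfl⟩ := hκ
  refine ⟨x * g * x⁻¹, hY x hx g hg, _, Hx.conj Hg, ?_⟩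
  simp [Perm.inv_eq_iff_eq.2 hσ.symm]

theorem exists_ne_one_mem_indKSubgroup (hY : ∀ x ∈ X, ∀ y ∈ Y, x * y * x⁻¹ ∈ Y)
    (hYB : Y ≤ baseGroup m (QA p d))
    (hMtr : ∀ i j : Fin m, ∃ g ∈ (X : Set (Perm (VA p d m))), ∃ h σ, IsQAutPair g h σ ∧ σ i = j)
    {g : Perm (VA p d m)} (hg : g ∈ Y) (hg1 : g ≠ 1) (i : Fin m) :
    ∃ κ ∈ indKSubgroup Y i, κ ≠ 1 := by
  obtain ⟨k, Hg⟩ := hYB hg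
  obtain ⟨j, hj⟩ : ∃ j, k j ≠ 1 := by
    by_contra! hk
    exact hg1 (Equiv.ext fun α => funext fun l => by rw [Hg, hk]; rfl)
  obtain ⟨x, hx, h, σ, Hx, rfl⟩ := hMtr j i
  refine ⟨_, ⟨x * g * x⁻¹, hY x hx g hg, _, Hx.conj Hg, rfl⟩, ?_⟩
  simpa using hj

theorem isPGroup_indKSubgroup (hpY : IsPGroup p Y) (i : Fin m) :
    IsPGroup p (indKSubgroup Y i) := by
  rintro ⟨_, g, hg, h, H, rfl⟩
  obtain ⟨n, hn⟩ := hpY ⟨g, hg⟩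
  have hgn : g ^ p ^ n = 1 := by simpa using congrArg Subtype.val hn
  refine ⟨n, Subtype.ext ?_⟩
  have := congrFun ((H.pow (p ^ n)).eq_of_base (hgn ▸ isQAutPair_one)) i
  simpa using this

variable (hY : ∀ x ∈ X, ∀ y ∈ Y, x * y * x⁻¹ ∈ Y) (hYK : Y ≤ X ⊓ baseGroup m (QA p d))
  (hG : ∀ i, IsAffine2Trans (indQSubgroup X i))
include hY hYK hG

theorem transSub_le_indKSubgroup
    (hMtr : ∀ i j : Fin m, ∃ g ∈ (X : Set (Perm (VA p d m))), ∃ h σ, IsQAutPair g h σ ∧ σ i = j)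
    {g : Perm (VA p d m)} (hg : g ∈ Y) (hg1 : g ≠ 1) (i : Fin m) :
    TransSub (QA p d) ≤ indKSubgroup Y i := by
  obtain ⟨κ, hκ, hκ1⟩ :=
    exists_ne_one_mem_indKSubgroup hY (hYK.trans inf_le_right) hMtr hg hg1 i
  exact (hG i).transSub_le_of_ne_one (fun _ hπ _ hκ => conj_mem_indKSubgroup hY hπ hκ)
    (indKSubgroup_le_indQSubgroup (hYK.trans inf_le_left) i) hκ hκ1

theorem le_transSub_of_isPGroup_of_le_kernel (hp : p.Prime) (hd : 1 ≤ d) (hpY : IsPGroup p Y) :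
    Y ≤ TransSub (VA p d m) := by
  have : Fact p.Prime := ⟨hp⟩
  have hcard : p ∣ Nat.card (QA p d) := by
    rw [Nat.card_eq_fintype_card, Fintype.card_fun, ZMod.card, Fintype.card_fin]
    exact dvd_pow_self p (by omega)
  intro g hg
  obtain ⟨h, H⟩ := (hYK hg).2
  exact H.mem_transSub fun i => (hG i).le_transSub_of_isPGroup
    (fun _ hπ _ hκ => conj_mem_indKSubgroup hY hπ hκ) hcard
    (indKSubgroup_le_indQSubgroup (hYK.trans inf_le_left) i) (isPGroup_indKSubgroup hpY i)
    ⟨g, hg, h, H, rfl⟩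

end InducedKernel

section Kernel

variable {p d m : ℕ} {X : Subgroup (Perm (VA p d m))}
  (hQA : ∀ g ∈ (X : Set (Perm (VA p d m))), IsQAut g)
  (hMtr : ∀ i j : Fin m, ∃ g ∈ (X : Set (Perm (VA p d m))), ∃ h σ, IsQAutPair g h σ ∧ σ i = j)
  (hG : ∀ i, IsAffine2Trans (indQSubgroup X i))

include hQA in
theorem conj_mem_kernel {x g : Perm (VA p d m)} (hx : x ∈ X)
    (hg : g ∈ X ⊓ baseGroup m (QA p d)) : x * g * x⁻¹ ∈ X ⊓ baseGroup m (QA p d) :=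
  ⟨X.mul_mem (X.mul_mem hx hg.1) (X.inv_mem hx), conj_mem_baseGroup (hQA x hx) hg.2⟩

include hG in
theorem normalizesTrans_of_mem_kernel {g : Perm (VA p d m)}
    (hg : g ∈ X ⊓ baseGroup m (QA p d)) : NormalizesTrans g :=
  let ⟨_, H⟩ := hg.2
  H.normalizesTrans fun i => (hG i).normalizesTrans _ (H.mem_indQSubgroup hg.1 rfl)

include hQA hMtr hG

/-- One commutator step: if `g ∈ K` has translation components on `J` but not at `i`, commuting
it with an element of `K` whose `i`-th component is a translation not commuting with `h i`
keeps translations on `J` and creates a nontrivial translation at `i`. -/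
theorem exists_kernel_components_mem_transSub_insert {g : Perm (VA p d m)}
    (hgK : g ∈ X ⊓ baseGroup m (QA p d)) (hg1 : g ≠ 1) {h : Fin m → Perm (QA p d)}
    (H : IsQAutPair g h 1) {J : Finset (Fin m)} (hJ : ∀ j ∈ J, h j ∈ TransSub (QA p d))
    (i : Fin m) :
    ∃ g' ∈ X ⊓ baseGroup m (QA p d), g' ≠ 1 ∧
      ∃ h', IsQAutPair g' h' 1 ∧ ∀ j ∈ insert i J, h' j ∈ TransSub (QA p d) := by
  by_cases hi : h i ∈ TransSub (QA p d)
  · exact ⟨g, hgK, hg1, h, H, (Finset.forall_mem_insert _ _ _).2 ⟨hi, hJ⟩⟩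
  obtain ⟨a, ha⟩ := not_forall.1 (mt mem_transSub_of_commute hi)
  obtain ⟨u, huK, k, Hu, hki⟩ :=
    transSub_le_indKSubgroup (fun _ hx _ hy => conj_mem_kernel hQA hx hy)
      le_rfl hG hMtr hgK hg1 i (addRight_mem_transSub a)
  have Hc := H.commutatorElement Hu
  have hnorm : ∀ j, NormalizesTrans (k j) := fun j =>
    (hG j).normalizesTrans _ (Hu.mem_indQSubgroup huK.1 rfl)
  refine ⟨⁅g, u⁆, ?_, fun h1 => ha ?_, _, Hc, (Finset.forall_mem_insert _ _ _).2 ⟨?_, ?_⟩⟩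
  · rw [commutatorElement_def]
    exact mul_mem (mul_mem (mul_mem hgK huK) (inv_mem hgK)) (inv_mem huK)
  · have := congrFun (Hc.eq_of_base (h1 ▸ isQAutPair_one)) i
    rw [← hki]
    exact commutatorElement_eq_one_iff_commute.1 this
  · rw [hki]
    exact ((hG i).normalizesTrans _ (H.mem_indQSubgroup hgK.1 rfl)).commutatorElement_mem
      (addRight_mem_transSub a)
  · intro j hj
    rw [← commutatorElement_inv]
    exact inv_mem ((hnorm j).commutatorElement_mem (hJ j hj))

theorem exists_ne_one_mem_kernel_transSub (hK : ∃ g ∈ KSet (X : Set (Perm (VA p d m))), g ≠ 1) :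
    ∃ g ∈ X ⊓ baseGroup m (QA p d), g ∈ TransSub (VA p d m) ∧ g ≠ 1 := by
  suffices ∀ J : Finset (Fin m), ∃ g ∈ X ⊓ baseGroup m (QA p d), g ≠ 1 ∧
      ∃ h, IsQAutPair g h 1 ∧ ∀ j ∈ J, h j ∈ TransSub (QA p d) by
    obtain ⟨g, hg, hg1, h, H, hT⟩ := this Finset.univ
    exact ⟨g, hg, H.mem_transSub fun i => hT i (Finset.mem_univ i), hg1⟩
  intro J
  induction J using Finset.induction_on with
  | empty =>
    obtain ⟨g, hg, hg1⟩ := hK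
    obtain ⟨h, H⟩ := hg.2
    exact ⟨g, hg, hg1, h, H, by simp⟩
  | insert i J _ ih =>
    obtain ⟨g, hg, hg1, h, H, hJ⟩ := ih
    exact exists_kernel_components_mem_transSub_insert hQA hMtr hG hg hg1 H hJ i

theorem exists_ne_one_mem_of_largest_pSubgroup
    (hK : ∃ g ∈ KSet (X : Set (Perm (VA p d m))), g ≠ 1) {N : Subgroup (Perm (VA p d m))}
    (hN4 : ∀ P : Subgroup (Perm (VA p d m)),
      (P : Set (Perm (VA p d m))) ⊆ KSet (X : Set (Perm (VA p d m))) →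
      IsPGroup p P →
      (∀ g ∈ KSet (X : Set (Perm (VA p d m))), ∀ t ∈ P, g * t * g⁻¹ ∈ P) → P ≤ N) :
    ∃ g ∈ N, g ≠ 1 := by
  obtain ⟨g, hgK, hgT, hg1⟩ := exists_ne_one_mem_kernel_transSub hQA hMtr hG hK
  refine ⟨g, hN4 (X ⊓ baseGroup m (QA p d) ⊓ TransSub (VA p d m)) (fun _ h => h.1)
    (isPGroup_transSub fun a => ?_).to_inf_right ?_ ⟨hgK, hgT⟩, hg1⟩
  · ext i j
    simp
  · rintro k (hk : k ∈ X ⊓ baseGroup m (QA p d)) t ⟨htK, htT⟩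
    refine Subgroup.mem_inf.2 ⟨?_, normalizesTrans_of_mem_kernel hG hk t htT⟩
    exact mul_mem (mul_mem hk htK) (inv_mem hk)

end Kernel

section TranslationSubgroup

variable {V : Type*} [AddCommGroup V] {X N : Subgroup (Perm V)}

/-- The orbit `0^N`, which is the paper's `W`. -/
def translationAddSubgroup (hN : N ≤ TransSub V) : AddSubgroup V where
  carrier := {v | ∃ g ∈ N, g 0 = v}
  zero_mem' := ⟨1, N.one_mem, rfl⟩
  add_mem' := by
    rintro _ _ ⟨g, hg, rfl⟩ ⟨g', hg', rfl⟩
    refine ⟨g * g', N.mul_mem hg hg', ?_⟩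
    rw [Perm.mul_apply, apply_eq_add_of_mem_transSub (hN hg), add_comm]
  neg_mem' := by
    rintro _ ⟨g, hg, rfl⟩
    refine ⟨g⁻¹, N.inv_mem hg, eq_neg_of_add_eq_zero_left ?_⟩
    simpa using (apply_eq_add_of_mem_transSub (hN hg) (g⁻¹ 0)).symm

def setwiseStab (X : Subgroup (Perm V)) (W : Set V) : Subgroup (Perm V) :=
  X ⊓ MulAction.stabilizer (Perm V) W

variable (hN : N ≤ TransSub V)
include hN

theorem addRight_mem_iff {α : V} : Equiv.addRight α ∈ N ↔ α ∈ translationAddSubgroup hN := by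
  refine ⟨fun h => ⟨_, h, zero_add α⟩, ?_⟩
  rintro ⟨g, hg, rfl⟩
  rwa [← mem_transSub_iff.1 (hN hg)]

theorem coe_eq_setOf_translations :
    (N : Set (Perm V)) = {g | ∃ α ∈ translationAddSubgroup hN, ∀ v, g v = v + α} := by
  ext g
  refine ⟨fun hg => ⟨g 0, ⟨g, hg, rfl⟩, apply_eq_add_of_mem_transSub (hN hg)⟩, ?_⟩
  rintro ⟨α, hα, hg⟩
  rwa [show g = Equiv.addRight α from Equiv.ext hg, SetLike.mem_coe, addRight_mem_iff hN]

theorem coe_translationAddSubgroup_subset (hNX : N ≤ X) {C : Set V}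
    (hXC : ∀ g ∈ (X : Set (Perm V)), g '' C = C) (h0 : 0 ∈ C) :
    (translationAddSubgroup hN : Set V) ⊆ C := by
  rintro _ ⟨n, hn, rfl⟩
  exact hXC n (hNX hn) ▸ Set.mem_image_of_mem n h0

theorem le_setwiseStab (hNX : N ≤ X) : N ≤ setwiseStab X (translationAddSubgroup hN) := fun g hg =>
  ⟨hNX hg, MulAction.mem_stabilizer_set.2 fun v => by
    rw [Perm.smul_def, apply_eq_add_of_mem_transSub (hN hg), SetLike.mem_coe, SetLike.mem_coe,
      AddSubgroup.add_mem_cancel_right _ (show g 0 ∈ translationAddSubgroup hN from ⟨g, hg, rfl⟩)]⟩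

variable (hNn : ∀ x ∈ X, ∀ n ∈ N, x * n * x⁻¹ ∈ N)
include hNn

theorem apply_mem_translationAddSubgroup {x : Perm V} (hx : x ∈ X) (hx0 : x 0 = 0) {w : V}
    (hw : w ∈ translationAddSubgroup hN) : x w ∈ translationAddSubgroup hN := by
  obtain ⟨g, hg, rfl⟩ := hw
  refine ⟨x * g * x⁻¹, hNn x hx g hg, ?_⟩
  rw [Perm.mul_apply, Perm.mul_apply, Perm.inv_eq_iff_eq.2 hx0.symm]

theorem mem_setwiseStab_of_apply_zero {x : Perm V} (hx : x ∈ X) (hx0 : x 0 = 0) :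
    x ∈ setwiseStab X (translationAddSubgroup hN) := by
  refine ⟨hx, MulAction.mem_stabilizer_set.2 fun v =>
    ⟨fun hv => ?_, apply_mem_translationAddSubgroup hN hNn hx hx0⟩⟩
  simpa using apply_mem_translationAddSubgroup hN hNn (X.inv_mem hx)
    (Perm.inv_eq_iff_eq.2 hx0.symm) hv

theorem exists_conj_addRight_eq {x : Perm V} (hx : x ∈ X) {α : V}
    (hα : α ∈ translationAddSubgroup hN) :
    ∃ β ∈ translationAddSubgroup hN, x * Equiv.addRight α * x⁻¹ = Equiv.addRight β := by
  have hc := hNn x hx _ ((addRight_mem_iff hN).2 hα)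
  exact ⟨_, ⟨_, hc, rfl⟩, mem_transSub_iff.1 (hN hc)⟩

theorem coe_setwiseStab_eq (hNX : N ≤ X) :
    (setwiseStab X (translationAddSubgroup hN) : Set (Perm V)) =
      {g | ∃ α ∈ translationAddSubgroup hN, ∃ y, y ∈ X ∧ y 0 = 0 ∧ g = Equiv.addRight α * y} := by
  ext x
  constructor
  · rintro ⟨hx, hxW⟩
    have hα : x 0 ∈ translationAddSubgroup hN :=
      (MulAction.mem_stabilizer_set.1 hxW 0).2 (zero_mem _)
    refine ⟨x 0, hα, (Equiv.addRight (x 0))⁻¹ * x,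
      X.mul_mem (X.inv_mem (hNX ((addRight_mem_iff hN).2 hα))) hx, by simp, by group⟩
  · rintro ⟨α, hα, y, hy, hy0, rfl⟩
    exact mul_mem (le_setwiseStab hN hNX ((addRight_mem_iff hN).2 hα))
      (mem_setwiseStab_of_apply_zero hN hNn hy hy0)

end TranslationSubgroup

section Codes

theorem NbrTrans.mono {m : ℕ} {Q : Type*} [DecidableEq Q] {X : Set (Perm (Fin m → Q))}
    {C : Set (Fin m → Q)} {s t : ℕ} (h : NbrTrans X C s) (hts : t ≤ s) : NbrTrans X C t :=
  fun j hj => h j (hj.trans hts)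

theorem distSet_subset_distSet {m : ℕ} {Q : Type*} [DecidableEq Q] {C W : Set (Fin m → Q)}
    (hWC : W ⊆ C) {j : ℕ}
    (hδ : ∀ u ∈ C, ∀ v ∈ C, u ≠ v → 2 * j ≤ hammingDist u v) : distSet W j ⊆ distSet C j := by
  rintro u ⟨⟨w, hw, hwu⟩, -⟩
  refine ⟨⟨w, hWC hw, hwu⟩, fun c hc => ?_⟩
  by_contra! hlt
  rcases eq_or_ne c w with rfl | hcw
  · omega
  have := hδ w (hWC hw) c hc hcw.symm
  have := hammingDist_triangle w u c
  rw [hammingDist_comm w u] at this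
  omega

theorem apply_eq_self_of_hammingDist_le {m : ℕ} {Q : Type*} [DecidableEq Q]
    {C : Set (Fin m → Q)} {s : ℕ}
    (hδ : ∀ u ∈ C, ∀ v ∈ C, u ≠ v → 2 * s < hammingDist u v) {g : Perm (Fin m → Q)}
    {h : Fin m → Perm Q} {σ : Perm (Fin m)} (H : IsQAutPair g h σ) {c u : Fin m → Q}
    (hc : c ∈ C) (hgc : g c ∈ C) (hu : hammingDist u c ≤ s) (hgu : hammingDist (g u) c ≤ s) :
    g c = c := by
  by_contra hne
  have hlt := hδ _ hgc _ hc hne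
  have htri := hammingDist_triangle (g c) (g u) c
  have hcu : hammingDist (g c) (g u) = hammingDist u c := by
    rw [H.hammingDist_eq, hammingDist_comm]
  omega

variable {m : ℕ} {A : Type*} [AddCommGroup A] [DecidableEq A]

theorem hammingDist_sub_right (u v w : Fin m → A) :
    hammingDist (u - w) v = hammingDist u (v + w) := by
  rw [hammingDist_eq_hammingNorm, hammingDist_eq_hammingNorm]
  congr 1
  abel

theorem hammingDist_single_zero (i : Fin m) {a : A} (ha : a ≠ 0) :
    hammingDist (Pi.single i a) (0 : Fin m → A) = 1 := by
  simp [hammingDist_zero_right, hammingNorm, Pi.single_apply, ha, Finset.filter_eq']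

variable {C : Set (Fin m → A)}

theorem sub_mem_distSet {W : AddSubgroup (Fin m → A)} {j : ℕ} {u α : Fin m → A}
    (hu : u ∈ distSet (W : Set (Fin m → A)) j) (hα : α ∈ W) :
    u - α ∈ distSet (W : Set (Fin m → A)) j := by
  obtain ⟨⟨w, hw, hwu⟩, hmin⟩ := hu
  refine ⟨⟨w - α, sub_mem hw hα, by rwa [hammingDist_sub_right, sub_add_cancel]⟩, fun c hc => ?_⟩
  rw [hammingDist_sub_right]
  exact hmin _ (add_mem hc hα)

theorem single_mem_distSet_one (h0 : 0 ∈ C)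
    (hδ : ∀ u ∈ C, ∀ v ∈ C, u ≠ v → 2 ≤ hammingDist u v) (i : Fin m) {a : A} (ha : a ≠ 0) :
    Pi.single i a ∈ distSet C 1 := by
  refine ⟨⟨0, h0, hammingDist_single_zero i ha⟩, fun c hc => Nat.one_le_iff_ne_zero.2 fun hd => ?_⟩
  obtain rfl := hammingDist_eq_zero.1 hd
  have := hδ _ hc 0 h0 (by simpa using ha)
  rw [hammingDist_single_zero i ha] at this
  omega

variable {X : Subgroup (Perm (Fin m → A))}
  (hQA : ∀ g ∈ (X : Set (Perm (Fin m → A))), IsQAut g)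
  (hXC : ∀ g ∈ (X : Set (Perm (Fin m → A))), g '' C = C)
include hQA hXC

theorem exists_fix_zero_single_eq_single (hNT : NbrTrans (X : Set (Perm (Fin m → A))) C 1)
    (hδ : ∀ u ∈ C, ∀ v ∈ C, u ≠ v → 2 < hammingDist u v) (h0 : 0 ∈ C) (i j : Fin m) {a b : A}
    (ha : a ≠ 0) (hb : b ≠ 0) :
    ∃ x ∈ X, x 0 = 0 ∧ ∃ h σ, IsQAutPair x h σ ∧ σ i = j ∧ h j a = b := by
  have hδ2 : ∀ u ∈ C, ∀ v ∈ C, u ≠ v → 2 ≤ hammingDist u v :=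
    fun u hu v hv huv => (hδ u hu v hv huv).le
  obtain ⟨g, hg, hgab⟩ := hNT 1 le_rfl _ (single_mem_distSet_one h0 hδ2 i ha) _
    (single_mem_distSet_one h0 hδ2 j hb)
  obtain ⟨h, σ, H⟩ := hQA g hg
  have hg0 : g 0 = 0 := apply_eq_self_of_hammingDist_le (s := 1) hδ H h0
    (hXC g hg ▸ Set.mem_image_of_mem g h0) (hammingDist_single_zero i ha).le
    (by rw [hgab, hammingDist_single_zero j hb])
  have hh0 : ∀ l, h l 0 = 0 := fun l => by simpa [hg0] using (H 0 l).symm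
  have hval : ∀ l, (Pi.single j b : Fin m → A) l = h l ((Pi.single i a : Fin m → A) (σ.symm l)) :=
    fun l => by rw [← hgab, H]
  have hσ : σ i = j := by
    by_contra hne
    have := hval (σ i)
    rw [Pi.single_eq_of_ne hne, symm_apply_apply, Pi.single_eq_same] at this
    exact ha ((h (σ i)).injective (this.symm.trans (hh0 _).symm))
  refine ⟨g, hg, hg0, h, σ, H, hσ, ?_⟩
  subst hσ
  simpa using (hval (σ i)).symm

theorem nbrTrans_of_translations {Y : Subgroup (Perm (Fin m → A))} {W : AddSubgroup (Fin m → A)}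
    {s : ℕ} (hNT : NbrTrans (X : Set (Perm (Fin m → A))) C s)
    (hδ : ∀ u ∈ C, ∀ v ∈ C, u ≠ v → 2 * s < hammingDist u v) (hWC : (W : Set (Fin m → A)) ⊆ C)
    (hWY : ∀ α ∈ W, Equiv.addRight α ∈ Y) (hX0Y : ∀ x ∈ X, x 0 = 0 → x ∈ Y) :
    NbrTrans (Y : Set (Perm (Fin m → A))) W s := by
  intro j hj u hu v hv
  have hδj : ∀ u ∈ C, ∀ v ∈ C, u ≠ v → 2 * j < hammingDist u v :=
    fun u hu v hv huv => (Nat.mul_le_mul_left 2 hj).trans_lt (hδ u hu v hv huv)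
  obtain ⟨wu, hwu, hdu⟩ := hu.1
  obtain ⟨wv, hwv, hdv⟩ := hv.1
  obtain ⟨g, hg, hguv⟩ := hNT j hj (u - wu)
    (distSet_subset_distSet hWC (fun u hu v hv huv => (hδj u hu v hv huv).le)
      (sub_mem_distSet hu hwu)) (v - wv)
    (distSet_subset_distSet hWC (fun u hu v hv huv => (hδj u hu v hv huv).le)
      (sub_mem_distSet hv hwv))
  obtain ⟨h, σ, H⟩ := hQA g hg
  have h0 : (0 : Fin m → A) ∈ C := hWC (zero_mem W)
  have hg0 : g 0 = 0 := apply_eq_self_of_hammingDist_le hδj H h0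
    (hXC g hg ▸ Set.mem_image_of_mem g h0) (by rw [hammingDist_sub_right, zero_add, hdu])
    (by rw [hguv, hammingDist_sub_right, zero_add, hdv])
  refine ⟨Equiv.addRight wv * g * (Equiv.addRight wu)⁻¹,
    mul_mem (mul_mem (hWY _ hwv) (hX0Y g hg hg0)) (inv_mem (hWY _ hwu)), ?_⟩
  simp [← sub_eq_add_neg, hguv]

end Codes

theorem alphabetAffine_setwiseStab {p d m : ℕ} [Nontrivial (QA p d)] {C : Set (VA p d m)}
    {X N : Subgroup (Perm (VA p d m))}
    (hQA : ∀ g ∈ (X : Set (Perm (VA p d m))), IsQAut g)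
    (hXC : ∀ g ∈ (X : Set (Perm (VA p d m))), g '' C = C)
    (hMtr : ∀ i j : Fin m, ∃ g ∈ (X : Set (Perm (VA p d m))), ∃ h σ, IsQAutPair g h σ ∧ σ i = j)
    (hG : ∀ i, IsAffine2Trans (indQSubgroup X i))
    (hNT : NbrTrans (X : Set (Perm (VA p d m))) C 1)
    (hδ : ∀ u ∈ C, ∀ v ∈ C, u ≠ v → 2 < hammingDist u v) (h0 : 0 ∈ C)
    (hNK : N ≤ X ⊓ baseGroup m (QA p d)) (hNT' : N ≤ TransSub (VA p d m))
    (hNn : ∀ x ∈ X, ∀ n ∈ N, x * n * x⁻¹ ∈ N) {g : Perm (VA p d m)} (hg : g ∈ N) (hg1 : g ≠ 1) :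
    AlphabetAffine (setwiseStab X (translationAddSubgroup hNT') : Set (Perm (VA p d m)))
      (translationAddSubgroup hNT') := by
  have hNXW := le_setwiseStab hNT' (hNK.trans inf_le_left)
  have hX0 : ∀ x ∈ X, x 0 = 0 → x ∈ setwiseStab X (translationAddSubgroup hNT') :=
    fun x hx hx0 => mem_setwiseStab_of_apply_zero hNT' hNn hx hx0
  refine ⟨fun x hx => hQA x hx.1, fun x hx => hx.2, ⟨g, ⟨hNXW hg, (hNK hg).2⟩, hg1⟩,
    fun i j => ?_,
    fun i => (IsAffine2Trans.iff_twoTransitive (G := indQSubgroup _ i)).1 ⟨?_, ?_, ?_⟩⟩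
  · obtain ⟨a, ha⟩ := exists_ne (0 : QA p d)
    obtain ⟨x, hx, hx0, h, σ, H, hσ, -⟩ :=
      exists_fix_zero_single_eq_single hQA hXC hNT hδ h0 i j ha ha
    exact ⟨x, hX0 x hx hx0, h, σ, H, hσ⟩
  · exact (transSub_le_indKSubgroup hNn hNK hG hMtr hg hg1 i).trans
      (indKSubgroup_le_indQSubgroup hNXW i)
  · exact fun π hπ => (hG i).normalizesTrans π (indQSubgroup_mono inf_le_left i hπ)
  · intro a b ha hb
    obtain ⟨x, hx, hx0, h, σ, H, hσ, hab⟩ :=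
      exists_fix_zero_single_eq_single hQA hXC hNT hδ h0 i i ha hb
    exact ⟨h i, H.mem_indQSubgroup (hX0 x hx hx0) hσ, by simpa [hx0] using (H 0 i).symm, hab⟩

theorem stmt5 (p d m : ℕ) (hp : p.Prime) (hd : 1 ≤ d)
    (C : Set (VA p d m)) (X : Subgroup (Perm (VA p d m)))
    (hAff : AlphabetAffine (X : Set (Perm (VA p d m))) C)
    (hNT : NbrTrans (X : Set (Perm (VA p d m))) C 2)
    (hδ : ∀ u ∈ C, ∀ v ∈ C, u ≠ v → 5 ≤ hammingDist u v)
    (h0 : (0 : VA p d m) ∈ C)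
    -- `N = O_p(K)`
    (N : Subgroup (Perm (VA p d m)))
    (hN1 : (N : Set (Perm (VA p d m))) ⊆ KSet (X : Set (Perm (VA p d m))))
    (hN2 : IsPGroup p N)
    (hN3 : ∀ g ∈ KSet (X : Set (Perm (VA p d m))), ∀ t ∈ N, g * t * g⁻¹ ∈ N)
    (hN4 : ∀ P : Subgroup (Perm (VA p d m)),
      (P : Set (Perm (VA p d m))) ⊆ KSet (X : Set (Perm (VA p d m))) →
      IsPGroup p P →
      (∀ g ∈ KSet (X : Set (Perm (VA p d m))), ∀ t ∈ P, g * t * g⁻¹ ∈ P) → P ≤ N)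
    -- `W` is the orbit of the zero vertex under `N`
    (W : Set (VA p d m))
    (hW : W = {v | ∃ g ∈ N, g (0 : VA p d m) = v}) :
    -- (1) `W ⊆ C` and `W` is an `X_0`-invariant `F_p`-subspace of `V`
    (W ⊆ C ∧ (0 : VA p d m) ∈ W ∧
      (∀ a ∈ W, ∀ b ∈ W, a + b ∈ W) ∧
      (∀ c : ZMod p, ∀ a ∈ W, c • a ∈ W) ∧
      (∀ x ∈ X, x (0 : VA p d m) = 0 → ∀ w ∈ W, x w ∈ W)) ∧
    -- (2) `N = T_W` and `X_W = T_W ⋊ X_0`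
    (((N : Set (Perm (VA p d m))) = {g | ∃ α ∈ W, ∀ v, g v = v + α}) ∧
      ({x : Perm (VA p d m) | x ∈ X ∧ x '' W = W} =
        {g | ∃ α ∈ W, ∃ y, y ∈ X ∧ y (0 : VA p d m) = 0 ∧ g = Equiv.addRight α * y}) ∧
      (∀ x ∈ X, x '' W = W → ∀ α ∈ W,
        ∃ β ∈ W, x * Equiv.addRight α * x⁻¹ = Equiv.addRight β) ∧
      (∀ α ∈ W, (Equiv.addRight α : Perm (VA p d m)) 0 = 0 → α = 0)) ∧
    -- (3) `W` is `(X_W,2)`-neighbour-transitive with minimum distance at least 5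
    (NbrTrans {x : Perm (VA p d m) | x ∈ X ∧ x '' W = W} W 2 ∧
      (∀ u ∈ W, ∀ v ∈ W, u ≠ v → 5 ≤ hammingDist u v)) ∧
    -- (4) `W` is `X_W`-alphabet-affine
    AlphabetAffine {x : Perm (VA p d m) | x ∈ X ∧ x '' W = W} W := by
  obtain ⟨hQA, hXC, hKne, hMtr, hloc⟩ := hAff
  have hG i : IsAffine2Trans (indQSubgroup X i) := IsAffine2Trans.iff_twoTransitive.2 (hloc i)
  have hNK : N ≤ X ⊓ baseGroup m (QA p d) := hN1
  have hNX : N ≤ X := hNK.trans inf_le_left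
  have hNn : ∀ x ∈ X, ∀ n ∈ N, x * n * x⁻¹ ∈ N := fun x hx _ =>
    conj_mem_of_largest_normal_pSubgroup hN1 hN2 hN3 hN4 (fun _ => conj_mem_kernel hQA hx)
      (fun _ hg => inv_inv x ▸ conj_mem_kernel hQA (X.inv_mem hx) hg)
  have hNT' : N ≤ TransSub (VA p d m) := le_transSub_of_isPGroup_of_le_kernel hNn hNK hG hp hd hN2
  obtain ⟨g, hg, hg1⟩ := exists_ne_one_mem_of_largest_pSubgroup hQA hMtr hG hKne hN4
  have : Fact p.Prime := ⟨hp⟩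
  have : Nonempty (Fin d) := ⟨⟨0, hd⟩⟩
  subst hW
  set W := translationAddSubgroup hNT'
  have hWC : (W : Set (VA p d m)) ⊆ C := coe_translationAddSubgroup_subset hNT' hNX hXC h0
  refine ⟨⟨hWC, W.zero_mem, fun _ ha _ hb => W.add_mem ha hb,
      fun c _ ha => (AddSubgroup.toZModSubmodule p W).smul_mem c ha,
      fun x hx hx0 _ hw => apply_mem_translationAddSubgroup hNT' hNn hx hx0 hw⟩,
    ⟨coe_eq_setOf_translations hNT', coe_setwiseStab_eq hNT' hNn hNX,
      fun x hx _ _ hα => exists_conj_addRight_eq hNT' hNn hx hα, fun α _ h => by simpa using h⟩,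
    ⟨nbrTrans_of_translations hQA hXC hNT (fun u hu v hv huv => by have := hδ u hu v hv huv; omega)
      hWC (fun α hα => le_setwiseStab hNT' hNX ((addRight_mem_iff hNT').2 hα))
      (fun x hx hx0 => mem_setwiseStab_of_apply_zero hNT' hNn hx hx0),
      fun u hu v hv => hδ u (hWC hu) v (hWC hv)⟩,
    alphabetAffine_setwiseStab hQA hXC hMtr hG (hNT.mono (by omega))
      (fun u hu v hv huv => by have := hδ u hu v hv huv; omega) h0 hNK hNT' hNn hg hg1⟩

end Paper
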